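/- Let M = (1/√2)·e^{7πi/12}·[[1, i],[1, −i]]. Then M³ = I₂. Consequently, the 5×5 block-diagonal matrix 𝔅 = M ⊕ P, where P = [[0,1,0],[0,0,1],[1,0,0]] is the cyclic permutation matrix, satisfies 𝔅³ = I₅. -/

import Mathlib

/-!
`M` is the scalar `c = e^{7πi/12}/√2` times `A = [[1, i], [1, -i]]`. A direct computation gives
`A³ = (2 + 2i) I`, while `c³ = e^{7πi/4}/(2√2) = (1 - i)/4`, and `(1 - i)(2 + 2i)/4 = 1`.
The cyclic permutation `P` has order three, and cubing a block-diagonal matrix cubes each block.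
-/

open Matrix Complex

noncomputable section

/-- Block-diagonal sum of square matrices. -/
def bdiag {m n : ℕ} (A : Matrix (Fin m) (Fin m) ℂ) (B : Matrix (Fin n) (Fin n) ℂ) :
    Matrix (Fin (m + n)) (Fin (m + n)) ℂ :=
  Matrix.reindex finSumFinEquiv finSumFinEquiv (Matrix.fromBlocks A 0 0 B)

/-- The associativity matrix `M = a^1_{x,x,x}`. -/
def MM : Matrix (Fin 2) (Fin 2) ℂ :=
  ((1 / (Real.sqrt 2 : ℂ)) * Complex.exp (7 * Real.pi * Complex.I / 12)) •
    !![1, Complex.I; 1, -Complex.I]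

/-- The cyclic permutation matrix `P = [[0,1,0],[0,0,1],[1,0,0]]`. -/
def PM : Matrix (Fin 3) (Fin 3) ℂ := !![0,1,0; 0,0,1; 1,0,0]

/-- The 'arm-bending' operator `𝔅 = M ⊕ P`. -/
def BB : Matrix (Fin 5) (Fin 5) ℂ := bdiag MM PM

section BlockDiagonal

variable {m n : ℕ}

theorem bdiag_mul (A C : Matrix (Fin m) (Fin m) ℂ) (B D : Matrix (Fin n) (Fin n) ℂ) :
    bdiag A B * bdiag C D = bdiag (A * C) (B * D) := by
  simp [bdiag, fromBlocks_multiply]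

theorem bdiag_one : bdiag (1 : Matrix (Fin m) (Fin m) ℂ) (1 : Matrix (Fin n) (Fin n) ℂ) = 1 := by
  simp [bdiag]

theorem bdiag_pow (A : Matrix (Fin m) (Fin m) ℂ) (B : Matrix (Fin n) (Fin n) ℂ) (k : ℕ) :
    bdiag A B ^ k = bdiag (A ^ k) (B ^ k) := by
  induction k with
  | zero => exact bdiag_one.symm
  | succ k ih => rw [pow_succ, ih, bdiag_mul, ← pow_succ, ← pow_succ]

end BlockDiagonal

theorem exp_seven_pi_div_twelve_mul_I_pow_three :
    exp (7 * Real.pi * I / 12) ^ 3 = √2 / 2 * (1 - I) := by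
  have h : 7 * Real.pi * I / 12 * 3 = 2 * Real.pi * I + ((-(Real.pi / 4) : ℝ) : ℂ) * I := by
    push_cast; ring
  rw [← exp_nat_mul, mul_comm, Nat.cast_ofNat, h, exp_add, exp_two_pi_mul_I, one_mul,
    exp_mul_I, ← ofReal_cos, ← ofReal_sin, Real.cos_neg, Real.sin_neg, Real.cos_pi_div_four,
    Real.sin_pi_div_four]
  push_cast
  ring

theorem MM_scalar_pow_three :
    ((1 / (√2 : ℂ)) * exp (7 * Real.pi * I / 12)) ^ 3 = (1 - I) / 4 := by
  have h2 : ((√2 : ℝ) : ℂ) ^ 2 = 2 := by norm_cast; simp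
  rw [mul_pow, exp_seven_pi_div_twelve_mul_I_pow_three]
  field_simp
  linear_combination (2 * I - 2) * h2

theorem pow_three_one_I_one_neg_I :
    !![1, I; 1, -I] ^ 3 = (2 + 2 * I) • (1 : Matrix (Fin 2) (Fin 2) ℂ) := by
  rw [pow_three, mul_fin_two, mul_fin_two, one_fin_two, smul_of]
  ext i j
  fin_cases i <;> fin_cases j <;> simp <;> ring_nf <;> simp only [I_sq] <;> ring

theorem MM_pow_three : MM ^ 3 = 1 := by
  have h : (1 - I) / 4 * (2 + 2 * I) = 1 := by linear_combination (-1/2 : ℂ) * I_sq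
  rw [MM, smul_pow, pow_three_one_I_one_neg_I, MM_scalar_pow_three, smul_smul, h, one_smul]

theorem PM_pow_three : PM ^ 3 = 1 := by
  rw [PM, pow_three, mul_fin_three, mul_fin_three, one_fin_three]
  norm_num

/-- `M³ = I₂`, hence `𝔅³ = I₅`: the category carries a strict pivotal structure. -/
theorem arm_bending_cubes_to_identity :
    MM ^ 3 = 1 ∧ BB ^ 3 = 1 :=
  ⟨MM_pow_three, by rw [BB, bdiag_pow, MM_pow_three, PM_pow_three, bdiag_one]⟩
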